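/- Let A and B be differentiable fields of antisymmetric matrices on ℝ⁴. Then at every point and for every index a: ∂_b (A_{ac} B^{bc}) = A_{ca} (∂_b B^{cb}) + (*B)_{ca} (∂_b (*A)^{cb}) + (1/2) B^{cd} ∂_a A_{cd}, with all indices raised by η and Einstein summation over repeated indices. -/

import Mathlib

noncomputable section

/-- The Minkowski metric diag(-1,1,1,1); it equals its own inverse. -/
def mink : Fin 4 → Fin 4 → ℝ :=
  fun a b => if a = b then (if a = 0 then -1 else 1) else 0

/-- The Levi-Civita symbol, totally antisymmetric with `lev 0 1 2 3 = 1`. -/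
def lev (a b c d : Fin 4) : ℝ :=
  (((b : ℕ) : ℝ) - ((a : ℕ) : ℝ)) * (((c : ℕ) : ℝ) - ((a : ℕ) : ℝ)) *
      (((d : ℕ) : ℝ) - ((a : ℕ) : ℝ)) * (((c : ℕ) : ℝ) - ((b : ℕ) : ℝ)) *
      (((d : ℕ) : ℝ) - ((b : ℕ) : ℝ)) * (((d : ℕ) : ℝ) - ((c : ℕ) : ℝ)) / 12

/-- Raise one index with the metric: `A^a = η^{ab} A_b`. -/
def raise1 (A : Fin 4 → ℝ) : Fin 4 → ℝ :=
  fun a => ∑ b, mink a b * A b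

/-- Raise both indices of a second rank tensor: `X^{ab} = η^{ac} η^{bd} X_{cd}`. -/
def raise2 (X : Fin 4 → Fin 4 → ℝ) : Fin 4 → Fin 4 → ℝ :=
  fun a b => ∑ c, ∑ d, mink a c * mink b d * X c d

/-- The Hodge dual of a second rank tensor: `(*X)_{ab} = (1/2) ε_{abcd} X^{cd}`. -/
def hodge (X : Fin 4 → Fin 4 → ℝ) : Fin 4 → Fin 4 → ℝ :=
  fun a b => (1 / 2) * ∑ c, ∑ d, lev a b c d * raise2 X c d

/-- The partial derivative of a function on ℝ⁴ in the `a`-th coordinate direction. -/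
def pd (a : Fin 4) (f : (Fin 4 → ℝ) → ℝ) (x : Fin 4 → ℝ) : ℝ :=
  fderiv ℝ f x (Pi.single a 1)

/-- The α-current of a field of antisymmetric matrices: `Z^a = ∂_b X^{ab}`. -/
def alphaCurrent (X : (Fin 4 → ℝ) → Fin 4 → Fin 4 → ℝ) (a : Fin 4) (x : Fin 4 → ℝ) : ℝ :=
  ∑ b, pd b (fun y => raise2 (X y) a b) x

/-- The β-current of a field of antisymmetric matrices: `Y^a = ∂_b (*X)^{ab}`. -/
def betaCurrent (X : (Fin 4 → ℝ) → Fin 4 → Fin 4 → ℝ) (a : Fin 4) (x : Fin 4 → ℝ) : ℝ :=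
  ∑ b, pd b (fun y => raise2 (hodge (X y)) a b) x

lemma raise2_eq (X : Fin 4 → Fin 4 → ℝ) (a b : Fin 4) :
    raise2 X a b = mink a a * mink b b * X a b := by
  fin_cases a <;> fin_cases b <;> simp [raise2, mink, Fin.sum_univ_four]

lemma fv0 : ((0 : Fin 4) : ℕ) = 0 := rfl
lemma fv1 : ((1 : Fin 4) : ℕ) = 1 := rfl
lemma fv2 : ((2 : Fin 4) : ℕ) = 2 := rfl
lemma fv3 : ((3 : Fin 4) : ℕ) = 3 := rfl

lemma mink00 : mink 0 0 = -1 := by simp [mink]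
lemma mink11 : mink 1 1 = 1 := by simp [mink]
lemma mink22 : mink 2 2 = 1 := by simp [mink]
lemma mink33 : mink 3 3 = 1 := by simp [mink]

lemma hodge00 (X : Fin 4 → Fin 4 → ℝ) : hodge X 0 0 = 0 := by
  simp only [hodge, Fin.sum_univ_four, raise2_eq]
  norm_num [lev, mink, fv0, fv1, fv2, fv3, Fin.ext_iff]
  try ring

lemma hodge01 (X : Fin 4 → Fin 4 → ℝ) : hodge X 0 1 = (X 2 3 - X 3 2) / 2 := by
  simp only [hodge, Fin.sum_univ_four, raise2_eq]
  norm_num [lev, mink, fv0, fv1, fv2, fv3, Fin.ext_iff]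
  try ring

lemma hodge02 (X : Fin 4 → Fin 4 → ℝ) : hodge X 0 2 = (X 3 1 - X 1 3) / 2 := by
  simp only [hodge, Fin.sum_univ_four, raise2_eq]
  norm_num [lev, mink, fv0, fv1, fv2, fv3, Fin.ext_iff]
  try ring

lemma hodge03 (X : Fin 4 → Fin 4 → ℝ) : hodge X 0 3 = (X 1 2 - X 2 1) / 2 := by
  simp only [hodge, Fin.sum_univ_four, raise2_eq]
  norm_num [lev, mink, fv0, fv1, fv2, fv3, Fin.ext_iff]
  try ring

lemma hodge10 (X : Fin 4 → Fin 4 → ℝ) : hodge X 1 0 = (X 3 2 - X 2 3) / 2 := by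
  simp only [hodge, Fin.sum_univ_four, raise2_eq]
  norm_num [lev, mink, fv0, fv1, fv2, fv3, Fin.ext_iff]
  try ring

lemma hodge11 (X : Fin 4 → Fin 4 → ℝ) : hodge X 1 1 = 0 := by
  simp only [hodge, Fin.sum_univ_four, raise2_eq]
  norm_num [lev, mink, fv0, fv1, fv2, fv3, Fin.ext_iff]
  try ring

lemma hodge12 (X : Fin 4 → Fin 4 → ℝ) : hodge X 1 2 = (X 3 0 - X 0 3) / 2 := by
  simp only [hodge, Fin.sum_univ_four, raise2_eq]
  norm_num [lev, mink, fv0, fv1, fv2, fv3, Fin.ext_iff]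
  try ring

lemma hodge13 (X : Fin 4 → Fin 4 → ℝ) : hodge X 1 3 = (X 0 2 - X 2 0) / 2 := by
  simp only [hodge, Fin.sum_univ_four, raise2_eq]
  norm_num [lev, mink, fv0, fv1, fv2, fv3, Fin.ext_iff]
  try ring

lemma hodge20 (X : Fin 4 → Fin 4 → ℝ) : hodge X 2 0 = (X 1 3 - X 3 1) / 2 := by
  simp only [hodge, Fin.sum_univ_four, raise2_eq]
  norm_num [lev, mink, fv0, fv1, fv2, fv3, Fin.ext_iff]
  try ring

lemma hodge21 (X : Fin 4 → Fin 4 → ℝ) : hodge X 2 1 = (X 0 3 - X 3 0) / 2 := by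
  simp only [hodge, Fin.sum_univ_four, raise2_eq]
  norm_num [lev, mink, fv0, fv1, fv2, fv3, Fin.ext_iff]
  try ring

lemma hodge22 (X : Fin 4 → Fin 4 → ℝ) : hodge X 2 2 = 0 := by
  simp only [hodge, Fin.sum_univ_four, raise2_eq]
  norm_num [lev, mink, fv0, fv1, fv2, fv3, Fin.ext_iff]
  try ring

lemma hodge23 (X : Fin 4 → Fin 4 → ℝ) : hodge X 2 3 = (X 1 0 - X 0 1) / 2 := by
  simp only [hodge, Fin.sum_univ_four, raise2_eq]
  norm_num [lev, mink, fv0, fv1, fv2, fv3, Fin.ext_iff]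
  try ring

lemma hodge30 (X : Fin 4 → Fin 4 → ℝ) : hodge X 3 0 = (X 2 1 - X 1 2) / 2 := by
  simp only [hodge, Fin.sum_univ_four, raise2_eq]
  norm_num [lev, mink, fv0, fv1, fv2, fv3, Fin.ext_iff]
  try ring

lemma hodge31 (X : Fin 4 → Fin 4 → ℝ) : hodge X 3 1 = (X 2 0 - X 0 2) / 2 := by
  simp only [hodge, Fin.sum_univ_four, raise2_eq]
  norm_num [lev, mink, fv0, fv1, fv2, fv3, Fin.ext_iff]
  try ring

lemma hodge32 (X : Fin 4 → Fin 4 → ℝ) : hodge X 3 2 = (X 0 1 - X 1 0) / 2 := by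
  simp only [hodge, Fin.sum_univ_four, raise2_eq]
  norm_num [lev, mink, fv0, fv1, fv2, fv3, Fin.ext_iff]
  try ring

lemma hodge33 (X : Fin 4 → Fin 4 → ℝ) : hodge X 3 3 = 0 := by
  simp only [hodge, Fin.sum_univ_four, raise2_eq]
  norm_num [lev, mink, fv0, fv1, fv2, fv3, Fin.ext_iff]
  try ring


lemma pd_sum {ι : Type*} {x : Fin 4 → ℝ} {a : Fin 4} {s : Finset ι} {f : ι → (Fin 4 → ℝ) → ℝ}
    (hf : ∀ i ∈ s, DifferentiableAt ℝ (f i) x) :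
    pd a (fun y => ∑ i ∈ s, f i y) x = ∑ i ∈ s, pd a (f i) x := by
  unfold pd
  rw [fderiv_fun_sum hf]
  simp

lemma pd_mul {x : Fin 4 → ℝ} {a : Fin 4} {f g : (Fin 4 → ℝ) → ℝ}
    (hf : DifferentiableAt ℝ f x) (hg : DifferentiableAt ℝ g x) :
    pd a (fun y => f y * g y) x = pd a f x * g x + f x * pd a g x := by
  unfold pd
  rw [fderiv_fun_mul hf hg]
  simp
  ring

lemma pd_const_mul {x : Fin 4 → ℝ} {a : Fin 4} {f : (Fin 4 → ℝ) → ℝ}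
    (hf : DifferentiableAt ℝ f x) (c : ℝ) :
    pd a (fun y => c * f y) x = c * pd a f x := by
  unfold pd
  rw [fderiv_const_mul hf]
  simp

lemma pdlin {x : Fin 4 → ℝ} (b : Fin 4) (coef : Fin 4 → Fin 4 → ℝ)
    (F : (Fin 4 → ℝ) → Fin 4 → Fin 4 → ℝ)
    (hF : ∀ g h, DifferentiableAt ℝ (fun y => F y g h) x) :
    pd b (fun y => ∑ g, ∑ h, coef g h * F y g h) x
      = ∑ g, ∑ h, coef g h * pd b (fun y => F y g h) x := by
  rw [pd_sum (fun g _ => DifferentiableAt.fun_sum fun h _ => ((hF g h).const_mul _))]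
  refine Finset.sum_congr rfl fun g _ => ?_
  rw [pd_sum (fun h _ => ((hF g h).const_mul _))]
  exact Finset.sum_congr rfl fun h _ => pd_const_mul (hF g h) _

lemma raise2_hodge_expand (X : Fin 4 → Fin 4 → ℝ) (c b : Fin 4) :
    raise2 (hodge X) c b
      = ∑ g, ∑ h, (mink c c * mink b b * (1 / 2) * lev c b g h * (mink g g * mink h h)) * X g h := by
  rw [raise2_eq]
  simp only [hodge, raise2_eq, Finset.mul_sum]
  exact Finset.sum_congr rfl fun g _ => Finset.sum_congr rfl fun h _ => by ring

lemma diag0 {P : Fin 4 → Fin 4 → ℝ} (hP : ∀ i j, P i j = -P j i) (i : Fin 4) : P i i = 0 := by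
  have := hP i i; linarith

lemma key (P Q : Fin 4 → Fin 4 → ℝ) (R S : Fin 4 → Fin 4 → Fin 4 → ℝ)
    (hP : ∀ i j, P i j = -P j i) (hQ : ∀ i j, Q i j = -Q j i)
    (hR : ∀ b i j, R b i j = -R b j i) (hS : ∀ b i j, S b i j = -S b j i)
    (a : Fin 4) :
    (∑ b, ∑ c, (R b a c * raise2 Q b c + P a c * raise2 (S b) b c))
      = (∑ c, P c a * ∑ b, raise2 (S b) c b)
        + (∑ c, hodge Q c a * ∑ b, raise2 (hodge (R b)) c b)
        + (1 / 2) * ∑ c, ∑ d, raise2 Q c d * R a c d := by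
  have h4 : ∀ z : Fin 4, z = 0 ∨ z = 1 ∨ z = 2 ∨ z = 3 := by decide
  rcases h4 a with h | h | h | h <;> subst h <;>
  · simp only [Fin.isValue, Fin.sum_univ_four, raise2_eq,
      hodge00, hodge01, hodge02, hodge03, hodge10, hodge11, hodge12, hodge13,
      hodge20, hodge21, hodge22, hodge23, hodge30, hodge31, hodge32, hodge33,
      mink00, mink11, mink22, mink33]
    simp only [hP 1 0,
      hP 2 0,
      hP 2 1,
      hP 3 0,
      hP 3 1,
      hP 3 2,
      hQ 1 0,
      hQ 2 0,
      hQ 2 1,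
      hQ 3 0,
      hQ 3 1,
      hQ 3 2,
      hR 0 1 0,
      hR 0 2 0,
      hR 0 2 1,
      hR 0 3 0,
      hR 0 3 1,
      hR 0 3 2,
      hR 1 1 0,
      hR 1 2 0,
      hR 1 2 1,
      hR 1 3 0,
      hR 1 3 1,
      hR 1 3 2,
      hR 2 1 0,
      hR 2 2 0,
      hR 2 2 1,
      hR 2 3 0,
      hR 2 3 1,
      hR 2 3 2,
      hR 3 1 0,
      hR 3 2 0,
      hR 3 2 1,
      hR 3 3 0,
      hR 3 3 1,
      hR 3 3 2,
      hS 0 1 0,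
      hS 0 2 0,
      hS 0 2 1,
      hS 0 3 0,
      hS 0 3 1,
      hS 0 3 2,
      hS 1 1 0,
      hS 1 2 0,
      hS 1 2 1,
      hS 1 3 0,
      hS 1 3 1,
      hS 1 3 2,
      hS 2 1 0,
      hS 2 2 0,
      hS 2 2 1,
      hS 2 3 0,
      hS 2 3 1,
      hS 2 3 2,
      hS 3 1 0,
      hS 3 2 0,
      hS 3 2 1,
      hS 3 3 0,
      hS 3 3 1,
      hS 3 3 2,
      diag0 hP,
      diag0 hQ,
      diag0 (hR 0),
      diag0 (hR 1),
      diag0 (hR 2),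
      diag0 (hR 3),
      diag0 (hS 0),
      diag0 (hS 1),
      diag0 (hS 2),
      diag0 (hS 3)]
    ring


/-- Product rule identity for two differentiable fields of antisymmetric matrices:
`∂_b (A_{ac} B^{bc}) = A_{ca} ∂_b B^{cb} + (*B)_{ca} ∂_b (*A)^{cb} + (1/2) B^{cd} ∂_a A_{cd}`. -/
theorem bilinear_divergence_identity
    (A B : (Fin 4 → ℝ) → Fin 4 → Fin 4 → ℝ)
    (hAanti : ∀ x a b, A x a b = - A x b a)
    (hBanti : ∀ x a b, B x a b = - B x b a)
    (hAdiff : ∀ a b, Differentiable ℝ (fun x => A x a b))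
    (hBdiff : ∀ a b, Differentiable ℝ (fun x => B x a b)) :
    ∀ (x : Fin 4 → ℝ) (a : Fin 4),
      (∑ b, pd b (fun y => ∑ c, A y a c * raise2 (B y) b c) x)
        = (∑ c, A x c a * alphaCurrent B c x)
            + (∑ c, hodge (B x) c a * betaCurrent A c x)
            + (1 / 2) * (∑ c, ∑ d, raise2 (B x) c d * pd a (fun y => A y c d) x) := by
  intro x a
  have hAd : ∀ c d, DifferentiableAt ℝ (fun y => A y c d) x := fun c d => (hAdiff c d) x
  have hBd : ∀ c d, DifferentiableAt ℝ (fun y => B y c d) x := fun c d => (hBdiff c d) x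
  have hL : ∀ b : Fin 4, pd b (fun y => ∑ c, A y a c * raise2 (B y) b c) x
      = ∑ c, (pd b (fun y => A y a c) x * raise2 (B x) b c
          + A x a c * raise2 (fun g h => pd b (fun y => B y g h) x) b c) := by
    intro b
    have hdiff : ∀ c ∈ (Finset.univ : Finset (Fin 4)),
        DifferentiableAt ℝ (fun y => A y a c * raise2 (B y) b c) x := by
      intro c _
      have h2 : (fun y => raise2 (B y) b c) = fun y => mink b b * mink c c * B y b c :=
        funext fun y => raise2_eq _ _ _
      exact (hAd a c).mul (h2 ▸ ((hBd b c).const_mul _))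
    rw [pd_sum hdiff]
    refine Finset.sum_congr rfl fun c _ => ?_
    have h2 : (fun y => A y a c * raise2 (B y) b c)
        = fun y => A y a c * (mink b b * mink c c * B y b c) :=
      funext fun y => by rw [raise2_eq]
    rw [h2, pd_mul (hAd a c) ((hBd b c).const_mul _), pd_const_mul (hBd b c), raise2_eq, raise2_eq]
    try ring
  have e2 : ∀ c, alphaCurrent B c x
      = ∑ b, raise2 (fun g h => pd b (fun y => B y g h) x) c b := by
    intro c
    unfold alphaCurrent
    refine Finset.sum_congr rfl fun b _ => ?_
    have h2 : (fun y => raise2 (B y) c b) = fun y => mink c c * mink b b * B y c b :=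
      funext fun y => raise2_eq _ _ _
    rw [h2, pd_const_mul (hBd c b), raise2_eq]
  have e3 : ∀ c, betaCurrent A c x
      = ∑ b, raise2 (hodge (fun g h => pd b (fun y => A y g h) x)) c b := by
    intro c
    unfold betaCurrent
    refine Finset.sum_congr rfl fun b _ => ?_
    have h2 : (fun y => raise2 (hodge (A y)) c b)
        = fun y => ∑ g, ∑ h,
            (mink c c * mink b b * (1 / 2) * lev c b g h * (mink g g * mink h h)) * A y g h :=
      funext fun y => raise2_hodge_expand (A y) c b
    rw [h2, pdlin b _ A hAd, raise2_hodge_expand]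
  have hRanti : ∀ (b i j : Fin 4),
      pd b (fun y => A y i j) x = -pd b (fun y => A y j i) x := by
    intro b i j
    have h2 : (fun y => A y i j) = fun y => -A y j i := funext fun y => hAanti y i j
    rw [h2]
    unfold pd
    rw [fderiv_fun_neg]
    simp
  have hSanti : ∀ (b i j : Fin 4),
      pd b (fun y => B y i j) x = -pd b (fun y => B y j i) x := by
    intro b i j
    have h2 : (fun y => B y i j) = fun y => -B y j i := funext fun y => hBanti y i j
    rw [h2]
    unfold pd
    rw [fderiv_fun_neg]
    simp
  rw [show (∑ b, pd b (fun y => ∑ c, A y a c * raise2 (B y) b c) x)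
      = ∑ b, ∑ c, (pd b (fun y => A y a c) x * raise2 (B x) b c
          + A x a c * raise2 (fun g h => pd b (fun y => B y g h) x) b c) from
    Finset.sum_congr rfl fun b _ => hL b]
  simp only [e2, e3]
  exact key (A x) (B x) (fun b g h => pd b (fun y => A y g h) x)
    (fun b g h => pd b (fun y => B y g h) x)
    (fun i j => hAanti x i j) (fun i j => hBanti x i j) hRanti hSanti a
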